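/- Let V, W be finite-dimensional complex vector spaces with finite collections of linear subspaces {V_γ}, {W_{b(γ)}} indexed compatibly via a monotone map b, such that the strata of V satisfy the axiom of frontier. Fix a stratum α. Then there exist an integer d₀ ≥ 0 and, for each point (v,w) with v in the open stratum V_α* and w ∈ W_{b(α)}, a polynomial map P : V → W of degree at most d₀ satisfying P(V_γ) ⊆ W_{b(γ)} for every stratum γ, and P(v) = w. Concretely, P can be taken of the form P(u) = f_v(u)·w where f_v is a product of linear functionals each vanishing on some V_β not containing V_α and equal to 1 at v. -/
import Mathlib


open MvPolynomial

/-- Pointwise surjectivity of stratified polynomial maps: there is a degree bound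
`d₀` such that every prescribed value `w ∈ W_{b(α)}` at a point `v` of the open
stratum `V_α^*` is attained by a stratified polynomial map `P` of degree `≤ d₀`,
which can be taken of the form `P(u) = (∏ⱼ lⱼ(u)) · w` with each `lⱼ` a linear
functional vanishing on some stratum not containing `V_α` and equal to `1` at `v`. -/
theorem stratified_poly_evaluation_surjective
    {n m : ℕ} {A B : Type*} [Fintype A] [Fintype B]
    (Vs : A → Submodule ℂ (Fin n → ℂ)) (Ws : B → Submodule ℂ (Fin m → ℂ))
    (b : A → B)
    (hmono : ∀ γ δ : A, Vs γ ≤ Vs δ → Ws (b γ) ≤ Ws (b δ))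
    (α : A) :
    ∃ d₀ : ℕ, ∀ (v : Fin n → ℂ) (w : Fin m → ℂ),
      v ∈ Vs α → (∀ γ : A, v ∈ Vs γ → Vs α ≤ Vs γ) → w ∈ Ws (b α) →
      ∃ P : Fin m → MvPolynomial (Fin n) ℂ,
        (∀ i, (P i).totalDegree ≤ d₀) ∧
        (∀ γ : A, ∀ u ∈ Vs γ, (fun i => eval u (P i)) ∈ Ws (b γ)) ∧
        (∀ i, eval v (P i) = w i) ∧
        ∃ (k : ℕ) (l : Fin k → ((Fin n → ℂ) →ₗ[ℂ] ℂ)),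
          k ≤ d₀ ∧
          (∀ j, ∃ β : A, ¬ Vs α ≤ Vs β ∧ ∀ u ∈ Vs β, l j u = 0) ∧
          (∀ j, l j v = 1) ∧
          (∀ (u : Fin n → ℂ) (i : Fin m),
            eval u (P i) = (∏ j, l j u) * w i) := by
  classical
  set S := {β : A // ¬ Vs α ≤ Vs β} with hS
  refine ⟨Fintype.card S, ?_⟩
  intro v w hv hopen hw
  -- for each β ∈ S, v ∉ Vs β, get a dual functional
  have hnm : ∀ β : S, v ∉ Vs β.1 := fun β hvb => β.2 (hopen β.1 hvb)
  have hfun : ∀ β : S, ∃ f : (Fin n → ℂ) →ₗ[ℂ] ℂ, f v = 1 ∧ ∀ u ∈ Vs β.1, f u = 0 := by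
    intro β
    obtain ⟨f, hf0, hfbot⟩ := (Vs β.1).exists_dual_map_eq_bot_of_notMem (hnm β) inferInstance
    refine ⟨(f v)⁻¹ • f, by simp [inv_mul_cancel₀ hf0], fun u hu => ?_⟩
    have : f u = 0 := by
      have : f u ∈ (Vs β.1).map f := ⟨u, hu, rfl⟩
      simpa [hfbot] using this
    simp [this]
  choose f hf1 hf0 using hfun
  set e := (Fintype.equivFin S).symm with he
  set l : Fin (Fintype.card S) → ((Fin n → ℂ) →ₗ[ℂ] ℂ) := fun j => f (e j) with hl
  -- linear polynomial for l j
  set lp : Fin (Fintype.card S) → MvPolynomial (Fin n) ℂ :=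
    fun j => ∑ i, C (l j (Pi.single i 1)) * X i with hlp
  have heval : ∀ j u, eval u (lp j) = l j u := by
    intro j u
    rw [hlp]
    simp only [map_sum, eval_mul, eval_C, eval_X]
    rw [LinearMap.pi_apply_eq_sum_univ (l j) u]
    refine Finset.sum_congr rfl fun i _ => ?_
    have hsingle : (Pi.single i 1 : Fin n → ℂ) = fun t => if i = t then 1 else 0 := by
      funext t; simp [Pi.single_apply, eq_comm]
    rw [hsingle, smul_eq_mul, mul_comm]
  have hdeg : ∀ j, (lp j).totalDegree ≤ 1 := by
    intro j
    refine (totalDegree_finset_sum _ _).trans ?_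
    refine Finset.sup_le fun i _ => ?_
    refine (totalDegree_mul _ _).trans ?_
    simp [totalDegree_X]
  set P : Fin m → MvPolynomial (Fin n) ℂ := fun i => C (w i) * ∏ j, lp j with hP
  have hevalP : ∀ u i, eval u (P i) = (∏ j, l j u) * w i := by
    intro u i
    rw [hP]
    simp only [eval_mul, eval_C, map_prod]
    rw [mul_comm]
    congr 1
    exact Finset.prod_congr rfl fun j _ => heval j u
  refine ⟨P, ?_, ?_, ?_, Fintype.card S, l, le_rfl, ?_, ?_, hevalP⟩
  · intro i
    rw [hP]
    refine (totalDegree_mul _ _).trans ?_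
    rw [totalDegree_C, zero_add]
    refine (totalDegree_finset_prod _ _).trans ?_
    calc ∑ j, (lp j).totalDegree ≤ ∑ _j : Fin (Fintype.card S), 1 :=
          Finset.sum_le_sum fun j _ => hdeg j
      _ = Fintype.card S := by simp
  · intro γ u hu
    by_cases hγ : Vs α ≤ Vs γ
    · have : (fun i => eval u (P i)) = (∏ j, l j u) • w := by
        funext i; rw [hevalP]; simp [smul_eq_mul]
      rw [this]
      exact Submodule.smul_mem _ _ (hmono α γ hγ hw)
    · have hz : l ((Fintype.equivFin S) ⟨γ, hγ⟩) u = 0 := by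
        rw [hl]
        simp only [he, Equiv.symm_apply_apply]
        exact hf0 ⟨γ, hγ⟩ u hu
      have : (fun i => eval u (P i)) = (0 : Fin m → ℂ) := by
        funext i
        rw [hevalP]
        have hp0 : (∏ j, l j u) = 0 :=
          Finset.prod_eq_zero (Finset.mem_univ ((Fintype.equivFin S) ⟨γ, hγ⟩)) hz
        simp [hp0]
      rw [this]
      exact Submodule.zero_mem _
  · intro i
    rw [hevalP]
    have : ∀ j, l j v = 1 := fun j => hf1 (e j)
    simp [this]
  · intro j
    exact ⟨(e j).1, (e j).2, hf0 (e j)⟩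
  · intro j
    exact hf1 (e j)
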